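/- Mehler's formula: for real x, y and |a| < 1, Σ_{n=0}^∞ H_n(x) H_n(y) aⁿ / (2ⁿ n!) = (1 − a²)^{-1/2} exp( (2xya − (x² + y²)a²) / (1 − a²) ), where H_n are the physicists' Hermite polynomials. -/

import Mathlib

open Polynomial

/-- The physicists' Hermite polynomials, defined by the recurrence
`H_0 = 1`, `H_{n+1}(x) = 2x H_n(x) - H_n'(x)`
(equivalent to `H_n(x) = (-1)^n e^{x²} dⁿ/dxⁿ e^{-x²}`). -/
noncomputable def hermiteP : ℕ → Polynomial ℝ
  | 0 => 1
  | n + 1 => 2 * Polynomial.X * hermiteP n - Polynomial.derivative (hermiteP n)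

/-!
The heart of the proof is the integral representation
`H_n(y) = 2ⁿ/√π ∫ (y + it)ⁿ e^{-t²} dt`, which follows from the three-term recurrence
`H_{n+1} = 2y H_n - 2n H_{n-1}` by integrating the derivative of `(y + it)ⁿ e^{-t²}` over `ℝ`.
Substituting it for `H_n(y)` and summing under the integral sign with the generating function
`∑ H_n(x) wⁿ/n! = e^{2xw - w²}` at `w = a(y + it)` turns Mehler's series into the integral of
a complex Gaussian in `t`, which is evaluated in closed form.

The interchange of sum and integral is justified by the majorant `(|y| + |t|)ⁿ e^{-t²}` of the
integrand. Bounding `H_n(x)` by the same representation, the double series of majorants is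
bounded by a multiple of `exp (2|a|uv - s² - t²)` with `u = |x| + |s|`, `v = |y| + |t|`; since
`2uv ≤ u² + v²` this is integrable exactly because `|a| < 1`. The generating function itself
comes from the same interchange, applied to `e^{2w(x + it)}`.
-/

open MeasureTheory Real Complex Finset
open scoped Nat

theorem derivative_hermiteP_succ (n : ℕ) :
    derivative (hermiteP (n + 1)) = 2 * (n + 1 : ℝ[X]) * hermiteP n := by
  induction n with
  | zero => simp [hermiteP]
  | succ n ih =>
    rw [hermiteP, derivative_sub, derivative_mul, ih, hermiteP]
    simp only [derivative_mul, derivative_ofNat, derivative_X, derivative_add,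
      derivative_natCast, derivative_one]
    push_cast
    ring

-- At `n = 0` the truncated `n - 1` is harmless, being multiplied by `n`.
theorem derivative_hermiteP (n : ℕ) :
    derivative (hermiteP n) = 2 * (n : ℝ[X]) * hermiteP (n - 1) := by
  cases n with
  | zero => simp [hermiteP]
  | succ n => simpa using derivative_hermiteP_succ n

theorem eval_hermiteP_succ (n : ℕ) (y : ℝ) :
    (hermiteP (n + 1)).eval y
      = 2 * y * (hermiteP n).eval y - 2 * n * (hermiteP (n - 1)).eval y := by
  simp [hermiteP, derivative_hermiteP]

theorem integrable_exp_mul_abs_sub_mul_sq (c : ℝ) {k : ℝ} (hk : 0 < k) :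
    Integrable fun t : ℝ => rexp (c * |t| - k * t ^ 2) := by
  refine ((integrable_exp_neg_mul_sq (half_pos hk)).const_mul (rexp (c ^ 2 / (2 * k)))).mono'
    (by fun_prop) (.of_forall fun t => ?_)
  rw [Real.norm_of_nonneg (exp_nonneg _), ← Real.exp_add, exp_le_exp]
  have h : c * |t| ≤ c ^ 2 / (2 * k) + k / 2 * t ^ 2 := by
    rw [div_add' _ _ _ (by positivity), le_div_iff₀ (by positivity), ← sq_abs t]
    nlinarith [sq_nonneg (k * |t| - c)]
  linarith

theorem integrable_exp_mul_sq_abs_add_sub_sq (c : ℝ) {r : ℝ} (hr : r < 1) :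
    Integrable fun t : ℝ => rexp (r * (|c| + |t|) ^ 2 - t ^ 2) := by
  refine ((integrable_exp_mul_abs_sub_mul_sq (2 * r * |c|) (sub_pos.2 hr)).const_mul
    (rexp (r * c ^ 2))).congr (.of_forall fun t => ?_)
  dsimp only
  rw [← Real.exp_add, add_sq, sq_abs, sq_abs]
  ring_nf

noncomputable def hermiteKernel (y : ℝ) (n : ℕ) (t : ℝ) : ℂ :=
  (y + t * I) ^ n * rexp (-t ^ 2)

noncomputable def hermiteMajorant (y : ℝ) (n : ℕ) : ℝ :=
  ∫ t, (|y| + |t|) ^ n * rexp (-t ^ 2)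

theorem norm_hermiteKernel_le (y : ℝ) (n : ℕ) (t : ℝ) :
    ‖hermiteKernel y n t‖ ≤ (|y| + |t|) ^ n * rexp (-t ^ 2) := by
  rw [hermiteKernel, norm_mul, norm_pow, norm_real, Real.norm_of_nonneg (exp_nonneg _)]
  gcongr
  exact (norm_add_le _ _).trans (by simp)

theorem integrable_pow_abs_add_mul_exp_neg_sq (y : ℝ) (n : ℕ) :
    Integrable fun t : ℝ => (|y| + |t|) ^ n * rexp (-t ^ 2) := by
  refine ((integrable_exp_mul_abs_sub_mul_sq 1 one_pos).const_mul (n ! * rexp |y|)).mono'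
    (by fun_prop) (.of_forall fun t => ?_)
  have h := pow_div_factorial_le_exp (x := |y| + |t|) (by positivity) n
  rw [div_le_iff₀ (by positivity)] at h
  rw [Real.norm_of_nonneg (by positivity)]
  calc (|y| + |t|) ^ n * rexp (-t ^ 2) ≤ rexp (|y| + |t|) * n ! * rexp (-t ^ 2) := by gcongr
    _ = n ! * rexp |y| * rexp (1 * |t| - 1 * t ^ 2) := by
      rw [Real.exp_add, one_mul, one_mul, sub_eq_add_neg, Real.exp_add]; ring

theorem integrable_hermiteKernel (y : ℝ) (n : ℕ) : Integrable (hermiteKernel y n) :=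
  (integrable_pow_abs_add_mul_exp_neg_sq y n).mono' (by unfold hermiteKernel; fun_prop)
    (.of_forall (norm_hermiteKernel_le y n))

theorem hasDerivAt_hermiteKernel (y : ℝ) (n : ℕ) (t : ℝ) :
    HasDerivAt (hermiteKernel y n) (n * I * hermiteKernel y (n - 1) t
      + 2 * I * hermiteKernel y (n + 1) t - 2 * I * y * hermiteKernel y n t) t := by
  have hlin : HasDerivAt (fun t : ℝ => (y + t * I : ℂ)) I t := by
    simpa using ((hasDerivAt_id (t : ℂ)).comp_ofReal.mul_const I).const_add (y : ℂ)
  have hgauss : HasDerivAt (fun t : ℝ => (rexp (-t ^ 2) : ℂ)) (-2 * t * rexp (-t ^ 2)) t := by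
    have : HasDerivAt (fun t : ℝ => rexp (-t ^ 2)) (-2 * t * rexp (-t ^ 2)) t := by
      simpa [mul_comm] using ((hasDerivAt_pow 2 t).neg).exp
    exact_mod_cast this.ofReal_comp
  -- `-2t = 2i (y + ti) - 2iy` rewrites the Gaussian's derivative through neighbouring kernels.
  refine ((hlin.pow n).mul hgauss).congr_deriv ?_
  unfold hermiteKernel
  simp only [Pi.pow_apply]
  linear_combination (-2 * t * (y + t * I) ^ n * (rexp (-t ^ 2) : ℂ)) * I_sq

theorem integral_hermiteKernel_succ (y : ℝ) (n : ℕ) :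
    2 * ∫ t, hermiteKernel y (n + 1) t
      = 2 * y * (∫ t, hermiteKernel y n t) - n * ∫ t, hermiteKernel y (n - 1) t := by
  have hint := integrable_hermiteKernel y
  have h := integral_eq_zero_of_hasDerivAt_of_integrable (hasDerivAt_hermiteKernel y n)
    ((((hint (n - 1)).const_mul _).add ((hint (n + 1)).const_mul _)).sub ((hint n).const_mul _))
    (hint n)
  rw [integral_sub (by exact ((hint _).const_mul _).add ((hint _).const_mul _))
      ((hint _).const_mul _), integral_add ((hint _).const_mul _) ((hint _).const_mul _),
    integral_const_mul, integral_const_mul, integral_const_mul] at h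
  linear_combination (-I) * h + (n * (∫ t, hermiteKernel y (n - 1) t)
    + 2 * (∫ t, hermiteKernel y (n + 1) t) - 2 * y * ∫ t, hermiteKernel y n t) * I_sq

theorem integral_hermiteKernel (y : ℝ) (n : ℕ) :
    ∫ t, hermiteKernel y n t = √π * (hermiteP n).eval y / 2 ^ n := by
  induction n using Nat.strong_induction_on with
  | _ n ih =>
    rcases n with _ | n
    · simp only [hermiteKernel, pow_zero, one_mul, hermiteP, eval_one, div_one]
      rw [integral_complex_ofReal]
      simpa using congrArg ((↑) : ℝ → ℂ) (integral_gaussian 1)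
    · have h := integral_hermiteKernel_succ y n
      rw [ih n (by omega), ih (n - 1) (by omega)] at h
      rw [eval_hermiteP_succ]
      rcases n with _ | n
      · push_cast at h ⊢
        linear_combination h / 2
      · simp only [Nat.add_sub_cancel, pow_succ] at h ⊢
        push_cast at h ⊢
        linear_combination h / 2

theorem abs_eval_hermiteP_le (x : ℝ) (n : ℕ) :
    |(hermiteP n).eval x| ≤ 2 ^ n / √π * hermiteMajorant x n := by
  have h : ‖∫ t, hermiteKernel x n t‖ ≤ hermiteMajorant x n :=
    (norm_integral_le_integral_norm _).trans (integral_mono (integrable_hermiteKernel x n).norm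
      (integrable_pow_abs_add_mul_exp_neg_sq x n) (norm_hermiteKernel_le x n))
  rw [integral_hermiteKernel, norm_div, norm_mul, norm_real, norm_real, norm_pow,
    Real.norm_of_nonneg (sqrt_nonneg π), Real.norm_eq_abs, RCLike.norm_ofNat] at h
  have hπ : 0 < √π := sqrt_pos.2 pi_pos
  rw [div_mul_eq_mul_div, le_div_iff₀ hπ]
  rw [div_le_iff₀ (by positivity)] at h
  linarith

theorem sum_range_mul_hermiteMajorant_le {y : ℝ} {b : ℕ → ℝ} {B : ℝ → ℝ}
    (hB : ∀ t N, ∑ n ∈ range N, b n * (|y| + |t|) ^ n ≤ B t)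
    (hBint : Integrable fun t => B t * rexp (-t ^ 2)) (N : ℕ) :
    ∑ n ∈ range N, b n * hermiteMajorant y n ≤ ∫ t, B t * rexp (-t ^ 2) := by
  have hint : ∀ n ∈ range N, Integrable fun t => b n * ((|y| + |t|) ^ n * rexp (-t ^ 2)) :=
    fun n _ => (integrable_pow_abs_add_mul_exp_neg_sq y n).const_mul (b n)
  calc ∑ n ∈ range N, b n * hermiteMajorant y n
      = ∫ t, ∑ n ∈ range N, b n * ((|y| + |t|) ^ n * rexp (-t ^ 2)) := by
        simp only [integral_finsetSum _ hint, integral_const_mul, hermiteMajorant]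
    _ ≤ ∫ t, B t * rexp (-t ^ 2) := by
        refine integral_mono (integrable_finsetSum _ hint) hBint fun t => ?_
        simp only [← mul_assoc, ← Finset.sum_mul]
        gcongr
        exact hB t N

theorem summable_mul_hermiteMajorant {y : ℝ} {b : ℕ → ℝ} {B : ℝ → ℝ}
    (hb : ∀ n, 0 ≤ b n) (hB : ∀ t N, ∑ n ∈ range N, b n * (|y| + |t|) ^ n ≤ B t)
    (hBint : Integrable fun t => B t * rexp (-t ^ 2)) :
    Summable fun n => b n * hermiteMajorant y n :=
  summable_of_sum_range_le (fun n => mul_nonneg (hb n) (integral_nonneg fun t => by positivity))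
    (sum_range_mul_hermiteMajorant_le hB hBint)

theorem hasSum_mul_eval_hermiteP {y : ℝ} {c : ℕ → ℂ} {F : ℝ → ℂ}
    (hF : ∀ t : ℝ, HasSum (fun n => c n * (y + t * I) ^ n) (F t))
    (hc : Summable fun n => ‖c n‖ * hermiteMajorant y n) :
    HasSum (fun n => c n * (√π * (hermiteP n).eval y / 2 ^ n)) (∫ t, F t * rexp (-t ^ 2)) := by
  have hint n : Integrable fun t => c n * hermiteKernel y n t :=
    (integrable_hermiteKernel y n).const_mul _
  have hnorm : Summable fun n => ∫ t, ‖c n * hermiteKernel y n t‖ := by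
    refine hc.of_nonneg_of_le (fun n => integral_nonneg fun t => norm_nonneg _) fun n => ?_
    rw [hermiteMajorant, ← integral_const_mul]
    refine integral_mono (hint n).norm
      ((integrable_pow_abs_add_mul_exp_neg_sq y n).const_mul _) fun t => ?_
    rw [norm_mul]
    gcongr
    exact norm_hermiteKernel_le y n t
  have hpt t : HasSum (fun n => c n * hermiteKernel y n t) (F t * rexp (-t ^ 2)) := by
    simpa only [hermiteKernel, mul_assoc] using (hF t).mul_right (rexp (-t ^ 2) : ℂ)
  have := hasSum_integral_of_summable_integral_norm hint hnorm
  simpa only [integral_const_mul, integral_hermiteKernel, (hpt _).tsum_eq] using this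

theorem integral_cexp_neg_mul_sq_add (β : ℝ) (hβ : 0 < β) (c d : ℂ) :
    ∫ t : ℝ, cexp (-β * t ^ 2 + c * t + d) = √(π / β) * cexp (d + c ^ 2 / (4 * β)) := by
  have hb : (-(β : ℂ)).re < 0 := by simpa using hβ
  rw [integral_cexp_quadratic hb, neg_neg, ← ofReal_div, Real.sqrt_eq_rpow,
    ofReal_cpow (by positivity)]
  push_cast
  ring_nf

theorem sum_range_pow_div_factorial_mul_pow_le_exp {κ u : ℝ} (hκ : 0 ≤ κ) (hu : 0 ≤ u)
    (N : ℕ) :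
    ∑ n ∈ range N, κ ^ n / n ! * u ^ n ≤ rexp (κ * u) := by
  simpa only [mul_pow, div_mul_eq_mul_div] using sum_le_exp_of_nonneg (mul_nonneg hκ hu) N

theorem integrable_exp_mul_abs_add_mul_exp_neg_sq (κ c : ℝ) :
    Integrable fun t : ℝ => rexp (κ * (|c| + |t|)) * rexp (-t ^ 2) := by
  refine ((integrable_exp_mul_abs_sub_mul_sq κ one_pos).const_mul (rexp (κ * |c|))).congr
    (.of_forall fun t => ?_)
  simp only [← Real.exp_add]
  ring_nf

theorem hasSum_eval_hermiteP_mul_pow_div_factorial (x : ℝ) (w : ℂ) :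
    HasSum (fun n => (hermiteP n).eval x * w ^ n / n !) (cexp (2 * x * w - w ^ 2)) := by
  have hF (t : ℝ) : HasSum (fun n => (2 * w) ^ n / n ! * (x + t * I) ^ n)
      (cexp (2 * w * (x + t * I))) := by
    rw [Complex.exp_eq_exp_ℂ]
    simpa only [mul_pow, div_mul_eq_mul_div] using
      NormedSpace.expSeries_div_hasSum_exp (2 * w * (x + t * I))
  have hc : Summable fun n => ‖(2 * w) ^ n / (n ! : ℂ)‖ * hermiteMajorant x n := by
    refine summable_mul_hermiteMajorant (fun n => norm_nonneg _) (fun t N => ?_)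
      (integrable_exp_mul_abs_add_mul_exp_neg_sq (2 * ‖w‖) x)
    simpa only [norm_div, norm_pow, norm_mul, RCLike.norm_ofNat, RCLike.norm_natCast] using
      sum_range_pow_div_factorial_mul_pow_le_exp (by positivity) (by positivity) N
  have hgauss : ∫ t : ℝ, cexp (2 * w * (x + t * I)) * rexp (-t ^ 2)
      = √π * cexp (2 * x * w - w ^ 2) := by
    have h (t : ℝ) : cexp (2 * w * (x + t * I)) * rexp (-t ^ 2)
        = cexp (-(1 : ℝ) * t ^ 2 + 2 * w * I * t + 2 * w * x) := by
      push_cast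
      rw [← Complex.exp_add]
      ring_nf
    simp only [h]
    rw [integral_cexp_neg_mul_sq_add 1 one_pos, div_one, ofReal_one, mul_one]
    congr 2
    linear_combination w ^ 2 * I_sq
  have h := hasSum_mul_eval_hermiteP hF hc
  rw [hgauss] at h
  have hπ : (√π : ℂ) ≠ 0 := ofReal_ne_zero.2 (sqrt_ne_zero'.2 pi_pos)
  refine (hasSum_mul_left_iff hπ).mp (h.congr_fun fun n => ?_)
  have : (2 : ℂ) ^ n ≠ 0 := pow_ne_zero _ two_ne_zero
  field_simp
  ring

theorem sum_range_abs_eval_hermiteP_mul_pow_le (x : ℝ) {a : ℝ} (ha : |a| < 1) {u : ℝ}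
    (hu : 0 ≤ u) (N : ℕ) :
    ∑ n ∈ range N, |(hermiteP n).eval x * a ^ n / n !| * u ^ n
      ≤ (∫ s, rexp (|a| * (|x| + |s|) ^ 2 - s ^ 2)) / √π * rexp (|a| * u ^ 2) := by
  have hπ : 0 < √π := sqrt_pos.2 pi_pos
  calc ∑ n ∈ range N, |(hermiteP n).eval x * a ^ n / n !| * u ^ n
      ≤ ∑ n ∈ range N, (2 * |a| * u) ^ n / n ! * hermiteMajorant x n / √π := by
        refine sum_le_sum fun n _ => ?_
        rw [abs_div, abs_mul, abs_pow, Nat.abs_cast, mul_pow, mul_pow]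
        have := abs_eval_hermiteP_le x n
        rw [div_mul_eq_mul_div, le_div_iff₀ hπ] at this
        rw [le_div_iff₀ hπ]
        calc |(hermiteP n).eval x| * |a| ^ n / n ! * u ^ n * √π
            = |(hermiteP n).eval x| * √π * (|a| ^ n / n ! * u ^ n) := by ring
          _ ≤ 2 ^ n * hermiteMajorant x n * (|a| ^ n / n ! * u ^ n) := by gcongr
          _ = _ := by ring
    _ = (∑ n ∈ range N, (2 * |a| * u) ^ n / n ! * hermiteMajorant x n) / √π := by
        rw [sum_div]
    _ ≤ (∫ s, rexp (2 * |a| * u * (|x| + |s|)) * rexp (-s ^ 2)) / √π := by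
        gcongr
        exact sum_range_mul_hermiteMajorant_le
          (fun s N => sum_range_pow_div_factorial_mul_pow_le_exp (by positivity) (by positivity) N)
          (integrable_exp_mul_abs_add_mul_exp_neg_sq _ x) N
    _ ≤ (∫ s, rexp (|a| * u ^ 2) * rexp (|a| * (|x| + |s|) ^ 2 - s ^ 2)) / √π := by
        refine div_le_div_of_nonneg_right (integral_mono
          (integrable_exp_mul_abs_add_mul_exp_neg_sq _ x)
          ((integrable_exp_mul_sq_abs_add_sub_sq x ha).const_mul _) fun s => ?_) hπ.le
        rw [← Real.exp_add, ← Real.exp_add, exp_le_exp]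
        nlinarith [mul_nonneg (abs_nonneg a) (sq_nonneg (u - (|x| + |s|)))]
    _ = _ := by
        rw [integral_const_mul]
        ring

theorem summable_abs_eval_hermiteP_mul_hermiteMajorant (x y : ℝ) {a : ℝ} (ha : |a| < 1) :
    Summable fun n => |(hermiteP n).eval x * a ^ n / n !| * hermiteMajorant y n := by
  refine summable_mul_hermiteMajorant (fun n => abs_nonneg _)
    (fun t N => sum_range_abs_eval_hermiteP_mul_pow_le x ha (by positivity) N)
    (((integrable_exp_mul_sq_abs_add_sub_sq y ha).const_mul
      ((∫ s, rexp (|a| * (|x| + |s|) ^ 2 - s ^ 2)) / √π)).congr (.of_forall fun t => ?_))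
  dsimp only
  rw [mul_assoc, ← Real.exp_add, sub_eq_add_neg]

theorem integral_cexp_mehler (x y : ℝ) {a : ℝ} (ha : |a| < 1) :
    ∫ t : ℝ, cexp (2 * x * (a * (y + t * I)) - (a * (y + t * I)) ^ 2) * rexp (-t ^ 2)
      = √π * ((√(1 - a ^ 2))⁻¹
          * rexp ((2 * x * y * a - (x ^ 2 + y ^ 2) * a ^ 2) / (1 - a ^ 2)) : ℝ) := by
  have h1a : 0 < 1 - a ^ 2 := by nlinarith [abs_nonneg a, sq_abs a]
  have h (t : ℝ) : cexp (2 * x * (a * (y + t * I)) - (a * (y + t * I)) ^ 2) * rexp (-t ^ 2)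
      = cexp (-(1 - a ^ 2 : ℝ) * t ^ 2 + 2 * a * (x - a * y) * I * t
          + (2 * a * x * y - a ^ 2 * y ^ 2)) := by
    push_cast
    rw [← Complex.exp_add]
    congr 1
    linear_combination (-(a : ℂ) ^ 2 * t ^ 2) * I_sq
  simp only [h]
  rw [integral_cexp_neg_mul_sq_add _ h1a, sqrt_div' _ h1a.le]
  have h1a' : (1 - a ^ 2 : ℂ) ≠ 0 := by exact_mod_cast h1a.ne'
  push_cast
  rw [div_eq_mul_inv, mul_assoc]
  congr 3
  field_simp
  linear_combination (4 * a ^ 2 * (x - a * y) ^ 2 : ℂ) * I_sq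

/-- Mehler's formula: for real `x, y` and `|a| < 1`,
`Σ_{n=0}^∞ H_n(x) H_n(y) aⁿ / (2ⁿ n!)
  = (1 − a²)^{-1/2} exp((2xya − (x² + y²)a²)/(1 − a²))`. -/
theorem mehler_formula (x y a : ℝ) (ha : |a| < 1) :
    HasSum
      (fun n : ℕ =>
        (hermiteP n).eval x * (hermiteP n).eval y * a ^ n / (2 ^ n * (n.factorial : ℝ)))
      ((Real.sqrt (1 - a ^ 2))⁻¹ *
        Real.exp ((2 * x * y * a - (x ^ 2 + y ^ 2) * a ^ 2) / (1 - a ^ 2))) := by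
  have hF (t : ℝ) :
      HasSum (fun n => (((hermiteP n).eval x * a ^ n / n ! : ℝ) : ℂ) * (y + t * I) ^ n)
        (cexp (2 * x * (a * (y + t * I)) - (a * (y + t * I)) ^ 2)) := by
    convert hasSum_eval_hermiteP_mul_pow_div_factorial x (a * (y + t * I)) using 2 with n
    rw [mul_pow]
    push_cast
    ring
  have h := hasSum_mul_eval_hermiteP hF
    (by simpa only [norm_real, Real.norm_eq_abs] using
      summable_abs_eval_hermiteP_mul_hermiteMajorant x y ha)
  rw [integral_cexp_mehler x y ha] at h
  have hπ : (√π : ℂ) ≠ 0 := ofReal_ne_zero.2 (sqrt_ne_zero'.2 pi_pos)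
  refine hasSum_ofReal.mp ((hasSum_mul_left_iff hπ).mp (h.congr_fun fun n => ?_))
  push_cast
  field_simp
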